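/- In misère Partizan Kayles, if Left moving first wins the position G + S₁, then Left's move in the S₁ component, moving G + S₁ to G, is a winning move for Left. -/
import Mathlib


/-- Add a strip of length `k` to a position (strips of length 0 are discarded). -/
def addStrip (m : Multiset ℕ) (k : ℕ) : Multiset ℕ := if k = 0 then m else k ::ₘ m

/-- Left removes one square from a strip of length `n ≥ 1`, leaving strips `i` and `n-1-i`. -/
def LeftMove (G G' : Multiset ℕ) : Prop :=
  ∃ n ∈ G, ∃ i, i + 1 ≤ n ∧ G' = addStrip (addStrip (G.erase n) i) (n - 1 - i)

/-- Right removes two adjacent squares from a strip of length `n ≥ 2`, leaving `i` and `n-2-i`. -/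
def RightMove (G G' : Multiset ℕ) : Prop :=
  ∃ n ∈ G, ∃ i, i + 2 ≤ n ∧ G' = addStrip (addStrip (G.erase n) i) (n - 2 - i)

mutual
  /-- Misère play: Left, to move, wins (a player unable to move wins). -/
  inductive LeftWinsMover : Multiset ℕ → Prop
    | cannot (G : Multiset ℕ) : (¬ ∃ G', LeftMove G G') → LeftWinsMover G
    | move (G G' : Multiset ℕ) : LeftMove G G' → LeftWinsWaiter G' → LeftWinsMover G
  /-- Misère play: Left wins with Right to move. -/
  inductive LeftWinsWaiter : Multiset ℕ → Prop
    | intro (G : Multiset ℕ) : (∃ G', RightMove G G') →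
        (∀ G', RightMove G G' → LeftWinsMover G') → LeftWinsWaiter G
end

inductive Outcome | L | N | P | R
  deriving DecidableEq

open Classical in
/-- The misère outcome `o⁻(G)`. -/
noncomputable def outcome (G : Multiset ℕ) : Outcome :=
  if LeftWinsMover G then (if LeftWinsWaiter G then Outcome.L else Outcome.N)
  else (if LeftWinsWaiter G then Outcome.P else Outcome.R)

/-- The partial order on outcomes: `L` greatest, `R` least, `N` and `P` incomparable. -/
def Outcome.le (a b : Outcome) : Prop := a = b ∨ a = Outcome.R ∨ b = Outcome.L

/-- `pos k j` is the position `kS₁ + jS₂`. -/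
def pos (k j : ℕ) : Multiset ℕ := Multiset.replicate k 1 + Multiset.replicate j 2


section KaylesAux

open Multiset

lemma addStrip_zero (m : Multiset ℕ) : addStrip m 0 = m := if_pos rfl

lemma addStrip_of_ne (m : Multiset ℕ) {k : ℕ} (h : k ≠ 0) : addStrip m k = k ::ₘ m := if_neg h

lemma addStrip_cons (a : ℕ) (m : Multiset ℕ) (k : ℕ) :
    addStrip (a ::ₘ m) k = a ::ₘ addStrip m k := by
  by_cases h : k = 0 <;> simp [addStrip, h, Multiset.cons_swap]

lemma addStrip_comm (m : Multiset ℕ) (j k : ℕ) :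
    addStrip (addStrip m j) k = addStrip (addStrip m k) j := by
  by_cases hj : j = 0 <;> by_cases hk : k = 0 <;>
    simp [addStrip, hj, hk, Multiset.cons_swap]

lemma mem_addStrip {x : ℕ} {m : Multiset ℕ} (k : ℕ) (h : x ∈ m) : x ∈ addStrip m k := by
  by_cases hk : k = 0 <;> simp [addStrip, hk, h]

lemma self_mem_addStrip {k : ℕ} (m : Multiset ℕ) (h : k ≠ 0) : k ∈ addStrip m k := by
  rw [addStrip_of_ne m h]; exact Multiset.mem_cons_self _ _

lemma mem_addStrip_cases {x k : ℕ} {m : Multiset ℕ} (h : x ∈ addStrip m k) : x ∈ m ∨ x = k := by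
  by_cases hk : k = 0
  · rw [hk, addStrip_zero] at h; exact Or.inl h
  · rw [addStrip_of_ne m hk] at h
    rcases Multiset.mem_cons.mp h with h | h
    · exact Or.inr h
    · exact Or.inl h

lemma addStrip_sum (m : Multiset ℕ) (k : ℕ) : (addStrip m k).sum = k + m.sum := by
  by_cases hk : k = 0 <;> simp [addStrip, hk]

lemma zero_notin_addStrip {m : Multiset ℕ} (k : ℕ) (h : 0 ∉ m) : 0 ∉ addStrip m k := by
  intro hx
  rcases mem_addStrip_cases hx with h' | h'
  · exact h h'
  · rw [← h', addStrip_zero] at hx; exact h hx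

lemma erase_cons_of_mem {m n : ℕ} {C : Multiset ℕ} (h : m ∈ C) :
    (n ::ₘ C).erase m = n ::ₘ C.erase m := by
  by_cases hmn : m = n
  · subst hmn; rw [Multiset.erase_cons_head]; exact (Multiset.cons_erase h).symm
  · exact Multiset.erase_cons_tail _ (fun hh => hmn hh.symm)

lemma addStrip_erase {m k : ℕ} {C : Multiset ℕ} (h : m ∈ C) :
    (addStrip C k).erase m = addStrip (C.erase m) k := by
  by_cases hk : k = 0
  · simp [hk, addStrip_zero]
  · rw [addStrip_of_ne _ hk, addStrip_of_ne _ hk, erase_cons_of_mem h]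

lemma addStrip_erase_self {k : ℕ} (C : Multiset ℕ) (h : k ≠ 0) :
    (addStrip C k).erase k = C := by
  rw [addStrip_of_ne _ h, Multiset.erase_cons_head]

lemma addStrip_eq (m : Multiset ℕ) (k : ℕ) :
    addStrip m k = m + (if k = 0 then 0 else {k}) := by
  by_cases hk : k = 0 <;> simp [addStrip, hk]
  rw [← Multiset.singleton_add, add_comm]

lemma rightMove_of_cons_one {G H : Multiset ℕ} (h : RightMove (1 ::ₘ G) H) :
    ∃ M, RightMove G M ∧ H = 1 ::ₘ M := by
  obtain ⟨n, hn, j, hj, rfl⟩ := h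
  have hn1 : (1:ℕ) ≠ n := by omega
  have hnG : n ∈ G := by
    rcases Multiset.mem_cons.mp hn with h | h
    · omega
    · exact h
  exact ⟨_, ⟨n, hnG, j, hj, rfl⟩, by
    rw [Multiset.erase_cons_tail _ hn1, addStrip_cons, addStrip_cons]⟩

lemma rightMove_cons_one {G M : Multiset ℕ} (h : RightMove G M) :
    RightMove (1 ::ₘ G) (1 ::ₘ M) := by
  obtain ⟨n, hn, j, hj, rfl⟩ := h
  have hn1 : (1:ℕ) ≠ n := by omega
  exact ⟨n, Multiset.mem_cons_of_mem hn, j, hj, by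
    rw [Multiset.erase_cons_tail _ hn1, addStrip_cons, addStrip_cons]⟩

lemma lww_cons_one_elim {G' : Multiset ℕ} (h : LeftWinsWaiter (1 ::ₘ G')) :
    ∀ G'', RightMove G' G'' → LeftWinsMover (1 ::ₘ G'') := by
  cases h with
  | intro _ _ hall => exact fun G'' hm => hall _ (rightMove_cons_one hm)

lemma rightMove_sum {X Y : Multiset ℕ} (h : RightMove X Y) : Y.sum + 2 = X.sum := by
  obtain ⟨n, hn, j, hj, rfl⟩ := h
  have hX : X.sum = n + (X.erase n).sum := by
    conv_lhs => rw [← Multiset.cons_erase hn]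
    rw [Multiset.sum_cons]
  rw [addStrip_sum, addStrip_sum]
  omega

lemma rightMove_zero {X Y : Multiset ℕ} (h0 : 0 ∉ X) (h : RightMove X Y) : 0 ∉ Y := by
  obtain ⟨n, hn, j, hj, rfl⟩ := h
  exact zero_notin_addStrip _ (zero_notin_addStrip _ (fun hh => h0 (Multiset.mem_of_mem_erase hh)))

lemma ones_not_LWM (X : Multiset ℕ) (h1 : ∀ x ∈ X, x = 1) (hne : X ≠ 0) :
    ¬ LeftWinsMover X := by
  intro h
  cases h with
  | cannot _ hno =>
    apply hno
    obtain ⟨a, ha⟩ := Multiset.exists_mem_of_ne_zero hne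
    have ha1 := h1 a ha
    subst ha1
    exact ⟨X.erase 1, 1, ha, 0, le_rfl, by simp [addStrip_zero]⟩
  | move _ H mv hww =>
    obtain ⟨n, hn, i, hi, hH⟩ := mv
    have hn1 := h1 n hn
    cases hww with
    | intro _ hex _ =>
      obtain ⟨H₂, m, hm, j, hj, _⟩ := hex
      have hm1 : m = 1 := by
        subst hn1
        have hi0 : i = 0 := by omega
        subst hi0
        rw [show (1:ℕ) - 1 - 0 = 0 from rfl, addStrip_zero, addStrip_zero] at hH
        subst hH
        exact h1 m (Multiset.mem_of_mem_erase hm)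
      omega

end KaylesAux


section KaylesCore

lemma coreA (G : Multiset ℕ) (hG0 : 0 ∉ G)
    (IHA : ∀ X : Multiset ℕ, X.sum < G.sum → 0 ∉ X →
      LeftWinsMover (1 ::ₘ X) → LeftWinsWaiter X)
    (IHE : ∀ X : Multiset ℕ, X.sum < G.sum → 0 ∉ X →
      LeftWinsWaiter (1 ::ₘ 1 ::ₘ X) → LeftWinsMover X)
    (n i : ℕ) (hn : n ∈ G) (hn2 : 2 ≤ n) (hi : i + 1 ≤ n)
    (hW : LeftWinsWaiter (1 ::ₘ addStrip (addStrip (G.erase n) i) (n - 1 - i))) :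
    LeftWinsWaiter G := by
  set C := G.erase n with hC
  have hGC : G = n ::ₘ C := (Multiset.cons_erase hn).symm
  have hC0 : 0 ∉ C := fun h => hG0 (Multiset.mem_of_mem_erase h)
  have hGsum : G.sum = n + C.sum := by rw [hGC, Multiset.sum_cons]
  have hG'sum : (addStrip (addStrip C i) (n - 1 - i)).sum = C.sum + (n - 1) := by
    rw [addStrip_sum, addStrip_sum]; omega
  have hre : ∀ G'', RightMove (addStrip (addStrip C i) (n - 1 - i)) G'' →
      LeftWinsWaiter G'' := by
    intro G'' h2
    have hsum := rightMove_sum h2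
    refine IHA G'' (by omega) ?_ (lww_cons_one_elim hW _ h2)
    exact rightMove_zero (zero_notin_addStrip _ (zero_notin_addStrip _ hC0)) h2
  refine LeftWinsWaiter.intro _ ⟨_, n, hn, 0, by omega, rfl⟩ ?_
  intro K hK
  obtain ⟨m, hm, j, hj, rfl⟩ := hK
  by_cases hmC : m ∈ C
  · -- Right moved in another strip: commute
    have hGem : G.erase m = n ::ₘ C.erase m := by
      rw [hGC, erase_cons_of_mem hmC]
    rw [hGem, addStrip_cons, addStrip_cons]
    refine LeftWinsMover.move _
      (addStrip (addStrip (addStrip (addStrip (C.erase m) j) (m - 2 - j)) i) (n - 1 - i))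
      ⟨n, Multiset.mem_cons_self _ _, i, hi, by rw [Multiset.erase_cons_head]⟩ ?_
    refine hre _ ⟨m, mem_addStrip _ (mem_addStrip _ hmC), j, hj, ?_⟩
    rw [addStrip_erase (mem_addStrip _ hmC), addStrip_erase hmC]
    simp only [addStrip_eq]
    abel
  · have hmn : m = n := by
      rw [hGC] at hm
      rcases Multiset.mem_cons.mp hm with h | h
      · exact h
      · exact absurd h hmC
    subst hmn
    rw [← hC]
    by_cases hij : i < j
    · -- Left's square is left of Right's pair
      have hj0 : j ≠ 0 := by omega
      refine LeftWinsMover.move _ (addStrip (addStrip (addStrip C (m - 2 - j)) i) (j - 1 - i))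
        ⟨j, mem_addStrip _ (self_mem_addStrip _ hj0), i, by omega, ?_⟩ ?_
      · rw [addStrip_comm C j (m - 2 - j), addStrip_erase_self _ hj0]
      · refine hre _ ⟨m - 1 - i, self_mem_addStrip _ (by omega), j - i - 1, by omega, ?_⟩
        rw [addStrip_erase_self _ (by omega : m - 1 - i ≠ 0)]
        have e1 : j - 1 - i = j - i - 1 := by omega
        have e2 : m - 1 - i - 2 - (j - i - 1) = m - 2 - j := by omega
        rw [e1, e2]
        simp only [addStrip_eq]
        abel
    · by_cases hij2 : j + 2 ≤ i
      · -- Left's square is right of Right's pair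
        have hnj0 : m - 2 - j ≠ 0 := by omega
        refine LeftWinsMover.move _ (addStrip (addStrip (addStrip C j) (i - j - 2)) (m - 1 - i))
          ⟨m - 2 - j, self_mem_addStrip _ hnj0, i - j - 2, by omega, ?_⟩ ?_
        · rw [addStrip_erase_self _ hnj0]
          have e : m - 2 - j - 1 - (i - j - 2) = m - 1 - i := by omega
          rw [e]
        · refine hre _ ⟨i, mem_addStrip _ (self_mem_addStrip _ (by omega)), j, by omega, ?_⟩
          rw [addStrip_erase (self_mem_addStrip C (by omega : i ≠ 0)),
            addStrip_erase_self _ (by omega : i ≠ 0)]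
          have e2 : i - 2 - j = i - j - 2 := by omega
          rw [e2]
          simp only [addStrip_eq]
          abel
      · by_cases h5 : (i = j ∧ j = m - 2) ∨ (i = j + 1 ∧ j = 0)
        · -- interaction case: use lemma E
          have hkey : addStrip (addStrip C i) (m - 1 - i) = 1 ::ₘ addStrip C (m - 2) ∧
              addStrip (addStrip C j) (m - 2 - j) = addStrip C (m - 2) := by
            rcases h5 with ⟨h1, h2⟩ | ⟨h1, h2⟩
            · subst h1; subst h2
              constructor
              · have e : m - 1 - (m - 2) = 1 := by omega
                rw [e, addStrip_of_ne _ one_ne_zero]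
              · have e : m - 2 - (m - 2) = 0 := by omega
                rw [e, addStrip_zero]
            · subst h2; subst h1
              constructor
              · rw [addStrip_comm]
                have e : m - 1 - (0 + 1) = m - 2 := by omega
                rw [e, show (0:ℕ) + 1 = 1 from rfl, addStrip_of_ne _ one_ne_zero]
              · rw [addStrip_zero]
                have e : m - 2 - 0 = m - 2 := by omega
                rw [e]
          rw [hkey.2]
          rw [hkey.1] at hW
          refine IHE (addStrip C (m - 2)) ?_ (zero_notin_addStrip _ hC0) hW
          rw [addStrip_sum]; omega
        · have hcases : (i = j ∧ j + 3 ≤ m) ∨ (i = j + 1 ∧ 1 ≤ j) := by omega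
          rcases hcases with ⟨h1, h2⟩ | ⟨h1, h2⟩
          · -- i = j, room on the right
            subst h1
            have hnj0 : m - 2 - i ≠ 0 := by omega
            refine LeftWinsMover.move _ (addStrip (addStrip C i) (m - 3 - i))
              ⟨m - 2 - i, self_mem_addStrip _ hnj0, 0, by omega, ?_⟩ ?_
            · rw [addStrip_erase_self _ hnj0, addStrip_zero]
              have e : m - 2 - i - 1 - 0 = m - 3 - i := by omega
              rw [e]
            · refine hre _ ⟨m - 1 - i, self_mem_addStrip _ (by omega), 0, by omega, ?_⟩
              rw [addStrip_erase_self _ (by omega : m - 1 - i ≠ 0), addStrip_zero]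
              have e : m - 1 - i - 2 - 0 = m - 3 - i := by omega
              rw [e]
          · -- i = j + 1, room on the left
            subst h1
            have hj0 : j ≠ 0 := by omega
            refine LeftWinsMover.move _ (addStrip (addStrip C (m - 2 - j)) (j - 1))
              ⟨j, mem_addStrip _ (self_mem_addStrip _ hj0), j - 1, by omega, ?_⟩ ?_
            · rw [addStrip_comm C j (m - 2 - j), addStrip_erase_self _ hj0]
              have e : j - 1 - (j - 1) = 0 := by omega
              rw [e, addStrip_zero]
            · refine hre _ ⟨j + 1, mem_addStrip _ (self_mem_addStrip _ (by omega)), j - 1,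
                by omega, ?_⟩
              rw [addStrip_erase (self_mem_addStrip C (by omega : j + 1 ≠ 0)),
                addStrip_erase_self _ (by omega : j + 1 ≠ 0)]
              have e1 : m - 1 - (j + 1) = m - 2 - j := by omega
              have e2 : j + 1 - 2 - (j - 1) = 0 := by omega
              rw [e1, e2, addStrip_zero]

end KaylesCore


section KaylesCoreE

lemma coreE (G : Multiset ℕ) (hG0 : 0 ∉ G)
    (IHA : ∀ X : Multiset ℕ, X.sum < G.sum → 0 ∉ X →
      LeftWinsMover (1 ::ₘ X) → LeftWinsWaiter X)
    (IHE : ∀ X : Multiset ℕ, X.sum < G.sum → 0 ∉ X →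
      LeftWinsWaiter (1 ::ₘ 1 ::ₘ X) → LeftWinsMover X)
    (hW : LeftWinsWaiter (1 ::ₘ 1 ::ₘ G)) : LeftWinsMover G := by
  have hex2 : ∃ M, RightMove G M := by
    obtain ⟨H, hH⟩ : ∃ H, RightMove (1 ::ₘ 1 ::ₘ G) H := by
      cases hW with
      | intro _ hex _ => exact hex
    obtain ⟨H1, h1, rfl⟩ := rightMove_of_cons_one hH
    obtain ⟨M, h2, rfl⟩ := rightMove_of_cons_one h1
    exact ⟨M, h2⟩
  have r2 : ∀ M, RightMove G M → LeftWinsMover (1 ::ₘ 1 ::ₘ M) :=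
    fun M h => lww_cons_one_elim hW _ (rightMove_cons_one h)
  obtain ⟨M₀, hM₀⟩ := hex2
  obtain ⟨n, hn, j₀, hj₀, -⟩ := hM₀
  have hn2 : 2 ≤ n := by omega
  set C := G.erase n with hC
  have hGC : G = n ::ₘ C := (Multiset.cons_erase hn).symm
  have hC0 : 0 ∉ C := fun h => hG0 (Multiset.mem_of_mem_erase h)
  have hGsum : G.sum = n + C.sum := by rw [hGC, Multiset.sum_cons]
  have hGs2 : 2 ≤ G.sum := by omega
  have star : ∀ M, RightMove G M → LeftWinsWaiter (1 ::ₘ M) := by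
    intro M h
    have hsum := rightMove_sum h
    refine IHA (1 ::ₘ M) (by rw [Multiset.sum_cons]; omega) ?_ (r2 M h)
    intro hmem
    rcases Multiset.mem_cons.mp hmem with h' | h'
    · exact one_ne_zero h'.symm
    · exact rightMove_zero hG0 h h'
  have starstar : ∀ M M₂, RightMove G M → RightMove M M₂ → LeftWinsWaiter M₂ := by
    intro M M₂ h h2
    have h3 : LeftWinsMover (1 ::ₘ M₂) := lww_cons_one_elim (star M h) _ h2
    have s1 := rightMove_sum h
    have s2 := rightMove_sum h2
    exact IHA M₂ (by omega) (rightMove_zero (rightMove_zero hG0 h) h2) h3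
  have hM : RightMove G (addStrip C (n - 2)) :=
    ⟨n, hn, 0, by omega, by rw [← hC, addStrip_zero, Nat.sub_zero]⟩
  by_cases hkey : 3 ≤ n ∨ ∃ c ∈ C, 2 ≤ c
  · -- Left's winning move: take an end square of strip n
    refine LeftWinsMover.move _ (addStrip C (n - 1)) ⟨n, hn, 0, by omega, ?_⟩ ?_
    · rw [← hC, addStrip_zero, Nat.sub_zero]
    refine LeftWinsWaiter.intro _ ?_ ?_
    · rcases hkey with h3 | ⟨c, hc, hc2⟩
      · exact ⟨_, n - 1, self_mem_addStrip _ (by omega), 0, by omega, rfl⟩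
      · exact ⟨_, c, mem_addStrip _ hc, 0, by omega, rfl⟩
    intro M' hM'
    obtain ⟨m, hm, j, hj, rfl⟩ := hM'
    by_cases hmC : m ∈ C
    · -- Right answered in another strip: commute
      have hMdef : RightMove G (n ::ₘ addStrip (addStrip (C.erase m) j) (m - 2 - j)) := by
        refine ⟨m, by rw [hGC]; exact Multiset.mem_cons_of_mem hmC, j, hj, ?_⟩
        rw [hGC, erase_cons_of_mem hmC, addStrip_cons, addStrip_cons]
      have hM2 : RightMove (n ::ₘ addStrip (addStrip (C.erase m) j) (m - 2 - j))
          (addStrip (addStrip (addStrip (C.erase m) j) (m - 2 - j)) (n - 2)) :=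
        ⟨n, Multiset.mem_cons_self _ _, 0, by omega,
          by rw [Multiset.erase_cons_head, addStrip_zero, Nat.sub_zero]⟩
      have hLWW := starstar _ _ hMdef hM2
      rw [addStrip_erase hmC]
      refine LeftWinsMover.move _ _
        ⟨n - 1, mem_addStrip _ (mem_addStrip _ (self_mem_addStrip _ (by omega : n - 1 ≠ 0))),
          0, by omega, ?_⟩ hLWW
      rw [addStrip_erase (mem_addStrip _ (self_mem_addStrip _ (by omega : n - 1 ≠ 0))),
        addStrip_erase (self_mem_addStrip _ (by omega : n - 1 ≠ 0)),
        addStrip_erase_self _ (by omega : n - 1 ≠ 0), addStrip_zero]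
      exact congrArg _ (by omega : n - 2 = n - 1 - 1 - 0)
    · -- Right answered inside Left's remaining piece
      have hmn : m = n - 1 := by
        rcases mem_addStrip_cases hm with h | h
        · exact absurd h hmC
        · exact h
      subst hmn
      rw [addStrip_erase_self _ (by omega : n - 1 ≠ 0)]
      have e0 : n - 1 - 2 - j = n - 3 - j := by omega
      rw [e0]
      by_cases hj1 : 1 ≤ j
      · have hLWW : LeftWinsWaiter (addStrip (addStrip C (j - 1)) (n - 3 - j)) := by
          refine starstar _ _ hM ⟨n - 2, self_mem_addStrip _ (by omega), j - 1, by omega, ?_⟩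
          rw [addStrip_erase_self _ (by omega : n - 2 ≠ 0)]
          have e : n - 2 - 2 - (j - 1) = n - 3 - j := by omega
          rw [e]
        refine LeftWinsMover.move _ _
          ⟨j, mem_addStrip _ (self_mem_addStrip _ (by omega : j ≠ 0)), j - 1, by omega, ?_⟩ hLWW
        rw [addStrip_comm C j (n - 3 - j), addStrip_erase_self _ (by omega : j ≠ 0)]
        have e : j - 1 - (j - 1) = 0 := by omega
        rw [e, addStrip_zero]
        exact addStrip_comm C (j - 1) (n - 3 - j)
      · have hj0 : j = 0 := by omega
        subst hj0
        rw [addStrip_zero, Nat.sub_zero]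
        by_cases hn4 : 4 ≤ n
        · have hLWW : LeftWinsWaiter (addStrip C (n - 4)) := by
            refine starstar _ _ hM ⟨n - 2, self_mem_addStrip _ (by omega), 0, by omega, ?_⟩
            rw [addStrip_erase_self _ (by omega : n - 2 ≠ 0), addStrip_zero]
            have e : n - 2 - 2 - 0 = n - 4 := by omega
            rw [e]
          refine LeftWinsMover.move _ _
            ⟨n - 3, self_mem_addStrip _ (by omega : n - 3 ≠ 0), 0, by omega, ?_⟩ hLWW
          rw [addStrip_erase_self _ (by omega : n - 3 ≠ 0), addStrip_zero]
          have e : n - 3 - 1 - 0 = n - 4 := by omega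
          rw [e]
        · have hn3 : n = 3 := by omega
          subst hn3
          rw [show (3:ℕ) - 3 - 0 = 0 from rfl, addStrip_zero]
          have hM1 : RightMove G (addStrip C 1) := by
            refine ⟨3, hn, 1, by omega, ?_⟩
            rw [← hC, show (3:ℕ) - 2 - 1 = 0 from rfl, addStrip_zero]
          have hstar := star _ hM1
          rw [addStrip_of_ne _ one_ne_zero] at hstar
          exact IHE C (by omega) hC0 hstar
  · -- degenerate: n = 2 and all other strips are single squares
    exfalso
    push_neg at hkey
    obtain ⟨hkn, hkC⟩ := hkey
    have hones : ∀ x ∈ (1 ::ₘ 1 ::ₘ C), x = 1 := by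
      intro x hx
      rcases Multiset.mem_cons.mp hx with h | hx2
      · exact h
      rcases Multiset.mem_cons.mp hx2 with h | h
      · exact h
      · have h1 := hkC x h
        have h2 : x ≠ 0 := fun e => hC0 (e ▸ h)
        omega
    have hMC : RightMove G C := by
      refine ⟨n, hn, 0, by omega, ?_⟩
      rw [← hC, addStrip_zero, show n - 2 - 0 = n - 2 from rfl,
        show n - 2 = 0 by omega, addStrip_zero]
    exact ones_not_LWM _ hones (Multiset.cons_ne_zero) (r2 C hMC)

end KaylesCoreE


section KaylesMain

lemma kayles_main : ∀ (s : ℕ) (G : Multiset ℕ), G.sum ≤ s → 0 ∉ G →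
    ((LeftWinsMover (1 ::ₘ G) → LeftWinsWaiter G) ∧
      (LeftWinsWaiter (1 ::ₘ 1 ::ₘ G) → LeftWinsMover G)) := by
  intro s
  induction s using Nat.strong_induction_on with
  | _ s IH =>
    intro G hGs hG0
    have IHA : ∀ X : Multiset ℕ, X.sum < G.sum → 0 ∉ X →
        LeftWinsMover (1 ::ₘ X) → LeftWinsWaiter X :=
      fun X hX h0 => (IH X.sum (lt_of_lt_of_le hX hGs) X le_rfl h0).1
    have IHE : ∀ X : Multiset ℕ, X.sum < G.sum → 0 ∉ X →
        LeftWinsWaiter (1 ::ₘ 1 ::ₘ X) → LeftWinsMover X :=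
      fun X hX h0 => (IH X.sum (lt_of_lt_of_le hX hGs) X le_rfl h0).2
    constructor
    · intro hLWM
      cases hLWM with
      | cannot _ hno =>
        exact absurd ⟨G, 1, Multiset.mem_cons_self 1 G, 0, le_rfl,
          by rw [Multiset.erase_cons_head, addStrip_zero, addStrip_zero]⟩ hno
      | move _ H mv hW =>
        obtain ⟨n, hn, i, hi, hH⟩ := mv
        by_cases hn1 : n = 1
        · subst hn1
          have hi0 : i = 0 := by omega
          subst hi0
          rw [Multiset.erase_cons_head, addStrip_zero, addStrip_zero] at hH
          exact hH ▸ hW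
        · have hnG : n ∈ G := by
            rcases Multiset.mem_cons.mp hn with h | h
            · exact absurd h hn1
            · exact h
          rw [Multiset.erase_cons_tail _ (fun hh => hn1 hh.symm), addStrip_cons,
            addStrip_cons] at hH
          rw [hH] at hW
          exact coreA G hG0 IHA IHE n i hnG (by omega) hi hW
    · exact coreE G hG0 IHA IHE

lemma outcome_NL_iff (X : Multiset ℕ) :
    (outcome X = Outcome.N ∨ outcome X = Outcome.L) ↔ LeftWinsMover X := by
  by_cases h1 : LeftWinsMover X <;> by_cases h2 : LeftWinsWaiter X <;>
    simp [outcome, h1, h2]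

lemma outcome_PL (X : Multiset ℕ) (h : LeftWinsWaiter X) :
    outcome X = Outcome.P ∨ outcome X = Outcome.L := by
  by_cases h1 : LeftWinsMover X <;> simp [outcome, h1, h]

end KaylesMain

theorem kayles_left_plays_in_S1 (G : Multiset ℕ) (hG : 0 ∉ G) :
    ((outcome (1 ::ₘ G) = Outcome.N ∨ outcome (1 ::ₘ G) = Outcome.L) →
      (outcome G = Outcome.P ∨ outcome G = Outcome.L)) ∧
    (LeftWinsMover (1 ::ₘ G) → LeftWinsWaiter G) := by
  have hA : LeftWinsMover (1 ::ₘ G) → LeftWinsWaiter G :=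
    fun h => (kayles_main G.sum G le_rfl hG).1 h
  exact ⟨fun h => outcome_PL _ (hA ((outcome_NL_iff _).mp h)), hA⟩
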